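/- (Closed-form average of equation-of-center terms.) Let 0 ≤ e < 1, η = √(1−e²), and ℓ_e(f) = f − 2·arctan( e·sin f / (1 + η + e·cos f) ) − e·η·sin f / (1 + e·cos f). Then for every integer m ≥ 1 and every α ∈ ℝ: (m/(2π)) · ∫₀^{2π} ( f − ℓ_e(f) )·sin(m·f + α) df = −( −e/(1+η) )^m · (1 + m·η) · cos α. -/

import Mathlib

/-!
The equation of the centre `f - ℓ(f)` vanishes at `0` and `2π`, and `dℓ/df = η³/(1 + e cos f)²`,
so one integration by parts turns the average into `-η³ cos α / 2π` times the cosine moment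
`∫ cos (m f) / (1 + e cos f)²`; the sine moment vanishes by the symmetry `f ↦ 2π - f`.
The cosine moments of `(1 + e cos f)⁻¹` and `(1 + e cos f)⁻²` obey three-term recurrences, from
`cos ((n+2) f) + cos (n f) = 2 cos f cos ((n+1) f)` and
`e cos f (1 + e cos f)⁻ᵏ⁻¹ = (1 + e cos f)⁻ᵏ - (1 + e cos f)⁻ᵏ⁻¹`, whose characteristic root is
`β = -e/(1+η)`; the zeroth moments `2π/η` and `2π/η³` come from the antiderivatives `E` (eccentric
anomaly) and `ℓ`.
-/

open Real intervalIntegral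

noncomputable def cosMoment (w : ℝ → ℝ) (n : ℕ) : ℝ :=
  ∫ x in 0..2 * π, w x * cos (n * x)

theorem cosMoment_zero (w : ℝ → ℝ) : cosMoment w 0 = ∫ x in 0..2 * π, w x := by
  simp [cosMoment]

theorem cosMoment_one (w : ℝ → ℝ) : cosMoment w 1 = cosMoment (fun x => w x * cos x) 0 := by
  simp [cosMoment]

theorem cosMoment_const {n : ℕ} (hn : n ≠ 0) (c : ℝ) : cosMoment (fun _ => c) n = 0 := by
  have hsin : sin (2 * π * n) = 0 := by rw [mul_comm, sin_periodic.nat_mul_eq, sin_zero]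
  simp [cosMoment, hn, mul_comm (n : ℝ) (2 * π), hsin]

theorem cosMoment_add_two {w : ℝ → ℝ} (hw : Continuous w) (n : ℕ) :
    cosMoment w (n + 2) + cosMoment w n = 2 * cosMoment (fun x => w x * cos x) (n + 1) := by
  have htrig (x : ℝ) :
      cos ((n + 2 : ℕ) * x) + cos (n * x) = 2 * (cos x * cos ((n + 1 : ℕ) * x)) := by
    have h₁ : ((n + 2 : ℕ) : ℝ) * x = (n + 1 : ℕ) * x + x := by push_cast; ring
    have h₂ : (n : ℝ) * x = (n + 1 : ℕ) * x - x := by push_cast; ring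
    rw [h₁, h₂, cos_add, cos_sub]
    ring
  simp only [cosMoment]
  rw [← integral_add (Continuous.intervalIntegrable (by fun_prop) _ _)
    (Continuous.intervalIntegrable (by fun_prop) _ _), ← integral_const_mul]
  congr 1
  ext x
  linear_combination w x * htrig x

theorem mul_cosMoment_mul_cos {e : ℝ} {u v : ℝ → ℝ} (hu : Continuous u) (hv : Continuous v)
    (huv : ∀ x, e * (v x * cos x) = u x - v x) (n : ℕ) :
    e * cosMoment (fun x => v x * cos x) n = cosMoment u n - cosMoment v n := by
  simp only [cosMoment]
  rw [← integral_const_mul, ← integral_sub (Continuous.intervalIntegrable (by fun_prop) _ _)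
    (Continuous.intervalIntegrable (by fun_prop) _ _)]
  congr 1
  ext x
  linear_combination cos (n * x) * huv x

theorem integral_mul_sin_nat_mul_eq_zero {w : ℝ → ℝ} (hsymm : ∀ x, w (2 * π - x) = w x)
    (n : ℕ) :
    ∫ x in 0..2 * π, w x * sin (n * x) = 0 := by
  have h := integral_comp_sub_left (fun x => w x * sin (n * x)) (a := 0) (b := 2 * π) (2 * π)
  simp only [hsymm, mul_sub, sin_nat_mul_two_pi_sub, sub_self, sub_zero, mul_neg, integral_neg] at h
  linarith

theorem integral_mul_cos_nat_mul_add {w : ℝ → ℝ} (hw : Continuous w)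
    (hsymm : ∀ x, w (2 * π - x) = w x) (n : ℕ) (α : ℝ) :
    ∫ x in 0..2 * π, w x * cos (n * x + α) = cos α * cosMoment w n := by
  have h (x : ℝ) :
      w x * cos (n * x + α) = cos α * (w x * cos (n * x)) - sin α * (w x * sin (n * x)) := by
    rw [cos_add]
    ring
  simp only [h]
  rw [integral_sub (Continuous.intervalIntegrable (by fun_prop) _ _)
    (Continuous.intervalIntegrable (by fun_prop) _ _), integral_const_mul, integral_const_mul,
    integral_mul_sin_nat_mul_eq_zero hsymm, mul_zero, sub_zero, cosMoment]

theorem integral_mul_sin_eq_integral_deriv_mul_cos_div {u u' : ℝ → ℝ} {a b m : ℝ}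
    (hu : ∀ x, HasDerivAt u (u' x) x) (hu' : Continuous u') (ha : u a = 0) (hb : u b = 0)
    (hm : m ≠ 0) (α : ℝ) :
    ∫ x in a..b, u x * sin (m * x + α) = (∫ x in a..b, u' x * cos (m * x + α)) / m := by
  have hv (x : ℝ) : HasDerivAt (fun x => -cos (m * x + α) / m) (sin (m * x + α)) x := by
    have h : HasDerivAt (fun x => m * x + α) m x := by
      simpa using ((hasDerivAt_id x).const_mul m).add_const α
    exact h.cos.neg.div_const m |>.congr_deriv (by field_simp)
  rw [integral_mul_deriv_eq_deriv_mul (fun x _ => hu x) (fun x _ => hv x)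
    (hu'.intervalIntegrable _ _) (Continuous.intervalIntegrable (by fun_prop) _ _)]
  simp [ha, hb, mul_neg, neg_div, mul_div_assoc', integral_div]

theorem one_add_mul_cos_pos {e : ℝ} (he : e ^ 2 < 1) (x : ℝ) : 0 < 1 + e * cos x := by
  have h : |e * cos x| < 1 := by
    rw [abs_mul]
    exact (mul_le_of_le_one_right (abs_nonneg e) (abs_cos_le_one x)).trans_lt
      ((sq_lt_one_iff_abs_lt_one e).1 he)
  linarith [neg_abs_le (e * cos x)]

/-- With `η = √(1 - e²)`, these are the eccentric anomaly `E` and, by Kepler's equation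
`ℓ = E - e sin E`, the mean anomaly, as functions of the true anomaly `f`. -/
noncomputable def eccentricAnomaly (e η f : ℝ) : ℝ :=
  f - 2 * arctan (e * sin f / (1 + η + e * cos f))

noncomputable def meanAnomaly (e η f : ℝ) : ℝ :=
  eccentricAnomaly e η f - e * η * sin f / (1 + e * cos f)

section Kepler

variable {e η : ℝ}

theorem hasDerivAt_eccentricAnomaly (hη₀ : 0 < η) (hη : η ^ 2 = 1 - e ^ 2) (x : ℝ) :
    HasDerivAt (eccentricAnomaly e η) (η / (1 + e * cos x)) x := by
  have hD := one_add_mul_cos_pos (e := e) (by nlinarith) x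
  have hv : 1 + η + e * cos x ≠ 0 := by linarith
  have hsc := sin_sq_add_cos_sq x
  have h := (((hasDerivAt_sin x).const_mul e).div
    (((hasDerivAt_cos x).const_mul e).const_add (1 + η)) hv).arctan.const_mul 2
  refine ((hasDerivAt_id x).sub h).congr_deriv ?_
  simp only [Pi.div_apply]
  field_simp
  linear_combination (-(e ^ 2) * (1 + e * cos x + η)) * hsc - (1 + e * cos x + η) * hη

theorem hasDerivAt_meanAnomaly (hη₀ : 0 < η) (hη : η ^ 2 = 1 - e ^ 2) (x : ℝ) :
    HasDerivAt (meanAnomaly e η) (η ^ 3 / (1 + e * cos x) ^ 2) x := by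
  have hD := one_add_mul_cos_pos (e := e) (by nlinarith) x
  have hsc := sin_sq_add_cos_sq x
  have h := ((hasDerivAt_sin x).const_mul (e * η)).div
    (((hasDerivAt_cos x).const_mul e).const_add 1) hD.ne'
  refine ((hasDerivAt_eccentricAnomaly hη₀ hη x).sub h).congr_deriv ?_
  field_simp
  linear_combination (-e ^ 2) * hsc - hη

theorem continuous_inv_one_add_mul_cos_pow (he : e ^ 2 < 1) (k : ℕ) :
    Continuous fun x => ((1 + e * cos x) ^ k)⁻¹ :=
  (by fun_prop : Continuous fun x => (1 + e * cos x) ^ k).inv₀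
    fun x => pow_ne_zero k (one_add_mul_cos_pos he x).ne'

theorem eccentricAnomaly_zero : eccentricAnomaly e η 0 = 0 := by simp [eccentricAnomaly]

theorem eccentricAnomaly_two_pi : eccentricAnomaly e η (2 * π) = 2 * π := by
  simp [eccentricAnomaly]

theorem meanAnomaly_zero : meanAnomaly e η 0 = 0 := by simp [meanAnomaly, eccentricAnomaly_zero]

theorem meanAnomaly_two_pi : meanAnomaly e η (2 * π) = 2 * π := by
  simp [meanAnomaly, eccentricAnomaly_two_pi]

theorem integral_inv_one_add_mul_cos (hη₀ : 0 < η) (hη : η ^ 2 = 1 - e ^ 2) :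
    ∫ x in 0..2 * π, (1 + e * cos x)⁻¹ = 2 * π / η := by
  have hcont : Continuous fun x => η * ((1 + e * cos x) ^ 1)⁻¹ :=
    continuous_const.mul (continuous_inv_one_add_mul_cos_pow (by nlinarith) 1)
  have h := integral_eq_sub_of_hasDerivAt (fun x _ => hasDerivAt_eccentricAnomaly hη₀ hη x)
    (by simpa [div_eq_mul_inv] using hcont.intervalIntegrable 0 (2 * π))
  simp only [div_eq_mul_inv, integral_const_mul, eccentricAnomaly_two_pi, eccentricAnomaly_zero,
    sub_zero] at h
  rw [eq_div_iff hη₀.ne', mul_comm, h]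

theorem integral_inv_one_add_mul_cos_sq (hη₀ : 0 < η) (hη : η ^ 2 = 1 - e ^ 2) :
    ∫ x in 0..2 * π, ((1 + e * cos x) ^ 2)⁻¹ = 2 * π / η ^ 3 := by
  have hcont : Continuous fun x => η ^ 3 * ((1 + e * cos x) ^ 2)⁻¹ :=
    continuous_const.mul (continuous_inv_one_add_mul_cos_pow (by nlinarith) 2)
  have h := integral_eq_sub_of_hasDerivAt (fun x _ => hasDerivAt_meanAnomaly hη₀ hη x)
    (by simpa [div_eq_mul_inv] using hcont.intervalIntegrable 0 (2 * π))
  simp only [div_eq_mul_inv, integral_const_mul, meanAnomaly_two_pi, meanAnomaly_zero,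
    sub_zero] at h
  rw [eq_div_iff (pow_pos hη₀ 3).ne', mul_comm, h]

theorem mul_neg_div_one_add_sq_add_two_mul_add (hη₀ : 0 < η) (hη : η ^ 2 = 1 - e ^ 2) :
    e * (-e / (1 + η)) ^ 2 + 2 * (-e / (1 + η)) + e = 0 := by
  have : 1 + η ≠ 0 := by positivity
  field_simp
  linear_combination e * hη

theorem one_add_mul_neg_div_one_add (hη₀ : 0 < η) (hη : η ^ 2 = 1 - e ^ 2) :
    1 + e * (-e / (1 + η)) = η := by
  have : 1 + η ≠ 0 := by positivity
  field_simp
  linear_combination -hη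

theorem cosMoment_inv_one_add_mul_cos (hη₀ : 0 < η) (hη : η ^ 2 = 1 - e ^ 2) (he : e ≠ 0)
    (n : ℕ) : cosMoment (fun x => (1 + e * cos x)⁻¹) n = 2 * π * (-e / (1 + η)) ^ n / η := by
  have he₁ : e ^ 2 < 1 := by nlinarith
  have hw : Continuous fun x => (1 + e * cos x)⁻¹ := by
    simpa using continuous_inv_one_add_mul_cos_pow he₁ 1
  have hmul := mul_cosMoment_mul_cos (u := fun _ => 1) continuous_const hw fun x => by
    field_simp [(one_add_mul_cos_pos he₁ x).ne']
    ring
  have hβ := mul_neg_div_one_add_sq_add_two_mul_add hη₀ hη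
  have hβ' := one_add_mul_neg_div_one_add hη₀ hη
  generalize -e / (1 + η) = β at hβ hβ' ⊢
  induction n using Nat.twoStepInduction with
  | zero => simp [cosMoment_zero, integral_inv_one_add_mul_cos hη₀ hη]
  | one =>
    apply mul_left_cancel₀ he
    rw [cosMoment_one, hmul, cosMoment_zero, cosMoment_zero, integral_inv_one_add_mul_cos hη₀ hη,
      integral_const, sub_zero, smul_eq_mul, mul_one]
    linear_combination (norm := (field_simp; ring)) (-2 * π / η) * hβ'
  | more n h₀ h₁ =>
    apply mul_left_cancel₀ he
    have hadd := cosMoment_add_two hw n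
    have hmul' := hmul (n + 1)
    rw [cosMoment_const n.succ_ne_zero] at hmul'
    linear_combination e * hadd + 2 * hmul' - e * h₀ - 2 * h₁ - (2 * π / η) * β ^ n * hβ

theorem cosMoment_inv_one_add_mul_cos_sq (hη₀ : 0 < η) (hη : η ^ 2 = 1 - e ^ 2) (he : e ≠ 0)
    (n : ℕ) : cosMoment (fun x => ((1 + e * cos x) ^ 2)⁻¹) n
      = 2 * π * (-e / (1 + η)) ^ n * (1 + n * η) / η ^ 3 := by
  have he₁ : e ^ 2 < 1 := by nlinarith
  have hw₁ : Continuous fun x => (1 + e * cos x)⁻¹ := by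
    simpa using continuous_inv_one_add_mul_cos_pow he₁ 1
  have hw₂ := continuous_inv_one_add_mul_cos_pow he₁ 2
  have hmul := mul_cosMoment_mul_cos hw₁ hw₂ fun x => by
    field_simp [(one_add_mul_cos_pos he₁ x).ne']
    ring
  have hJ := cosMoment_inv_one_add_mul_cos hη₀ hη he
  have hβ := mul_neg_div_one_add_sq_add_two_mul_add hη₀ hη
  have hβ' := one_add_mul_neg_div_one_add hη₀ hη
  generalize -e / (1 + η) = β at hβ hβ' hJ ⊢
  induction n using Nat.twoStepInduction with
  | zero => simp [cosMoment_zero, integral_inv_one_add_mul_cos_sq hη₀ hη]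
  | one =>
    apply mul_left_cancel₀ he
    rw [cosMoment_one, hmul, cosMoment_zero, cosMoment_zero, integral_inv_one_add_mul_cos hη₀ hη,
      integral_inv_one_add_mul_cos_sq hη₀ hη]
    linear_combination (norm := (field_simp; ring)) (-2 * π * (1 + η) / η ^ 3) * hβ'
  | more n h₀ h₁ =>
    apply mul_left_cancel₀ he
    have hadd := cosMoment_add_two hw₂ n
    have hmul' := hmul (n + 1)
    rw [hJ] at hmul'
    push_cast at h₁ ⊢
    linear_combination (norm := (field_simp; ring)) e * hadd + 2 * hmul' - e * h₀ - 2 * h₁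
      - (2 * π / η ^ 3) * β ^ n * (1 + n * η) * hβ - (2 * π / η ^ 3) * 2 * η * β ^ (n + 1) * hβ'

theorem integral_sub_meanAnomaly_mul_sin (hη₀ : 0 < η) (hη : η ^ 2 = 1 - e ^ 2) {m : ℕ}
    (hm : m ≠ 0) (α : ℝ) :
    ∫ x in 0..2 * π, (x - meanAnomaly e η x) * sin (m * x + α)
      = -(2 * π * (-e / (1 + η)) ^ m * (1 + m * η) * cos α) / m := by
  rcases eq_or_ne e 0 with rfl | he
  · simp [meanAnomaly, eccentricAnomaly, hm]
  have hw := continuous_inv_one_add_mul_cos_pow (e := e) (by nlinarith) 2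
  have hsymm (x : ℝ) : ((1 + e * cos (2 * π - x)) ^ 2)⁻¹ = ((1 + e * cos x) ^ 2)⁻¹ := by
    rw [cos_two_pi_sub]
  have hderiv (x : ℝ) : HasDerivAt (fun x => x - meanAnomaly e η x)
      (1 - η ^ 3 * ((1 + e * cos x) ^ 2)⁻¹) x :=
    ((hasDerivAt_id' x).sub (hasDerivAt_meanAnomaly hη₀ hη x)).congr_deriv
      (by rw [div_eq_mul_inv])
  have hcos : ∫ x in 0..2 * π, cos (m * x + α) = 0 := by
    simpa [cosMoment_const hm] using
      integral_mul_cos_nat_mul_add (w := fun _ => 1) continuous_const (fun _ => rfl) m α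
  rw [integral_mul_sin_eq_integral_deriv_mul_cos_div hderiv
    (continuous_const.sub (continuous_const.mul hw)) (by simp [meanAnomaly_zero])
    (by simp [meanAnomaly_two_pi]) (Nat.cast_ne_zero.2 hm)]
  simp only [sub_mul, one_mul, mul_assoc]
  rw [integral_sub (Continuous.intervalIntegrable (by fun_prop) _ _)
    (Continuous.intervalIntegrable (by fun_prop) _ _), integral_const_mul,
    integral_mul_cos_nat_mul_add hw hsymm, hcos, cosMoment_inv_one_add_mul_cos_sq hη₀ hη he]
  field_simp
  ring

end Kepler

/-- (Closed-form average of equation-of-center terms.)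
For every integer `m ≥ 1` and every `α ∈ ℝ`:
`(m/(2π)) ∫₀^{2π} (f − ℓ_e f) sin(m f + α) df = −(−e/(1+η))^m (1+m η) cos α`. -/
theorem equation_of_center_average
    (e η : ℝ) (he0 : 0 ≤ e) (he1 : e < 1)
    (hη : η = Real.sqrt (1 - e ^ 2))
    (ℓ : ℝ → ℝ)
    (hℓ : ∀ f : ℝ, ℓ f =
      f - 2 * Real.arctan (e * Real.sin f / (1 + η + e * Real.cos f))
        - e * η * Real.sin f / (1 + e * Real.cos f)) :
    ∀ (m : ℤ), 1 ≤ m → ∀ (α : ℝ),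
      ((m : ℝ) / (2 * Real.pi)) *
        ∫ f in (0 : ℝ)..(2 * Real.pi), (f - ℓ f) * Real.sin ((m : ℝ) * f + α)
      = -((-e / (1 + η)) ^ m) * (1 + (m : ℝ) * η) * Real.cos α := by
  intro m hm α
  have hη₀ : 0 < η := hη ▸ sqrt_pos.2 (by nlinarith)
  have hη₂ : η ^ 2 = 1 - e ^ 2 := hη ▸ sq_sqrt (by nlinarith)
  obtain rfl : ℓ = meanAnomaly e η := funext hℓ
  lift m to ℕ using by omega
  have hm₀ : m ≠ 0 := by omega
  rw [zpow_natCast, Int.cast_natCast, integral_sub_meanAnomaly_mul_sin hη₀ hη₂ hm₀ α]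
  field_simp
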